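/- Let (X,d) be a metric space and let U be a subset of F_USCG(X). Then the following statements are equivalent: (i) U is compact in (F_USCG(X), H_end); (ii) U(α) = ⋃_{u∈U} [u]_α is relatively compact in X for each α ∈ (0,1] and U is closed in (F_USCG(X), H_end); (iii) U(α) is compact in X for each α ∈ (0,1] and U is closed in (F_USCG(X), H_end). -/

import Mathlib

open Set Filter Metric Topology MeasureTheory

/-- The α-cut of a fuzzy set `u : X → ℝ`: for `α ≠ 0` it is `{x | u x ≥ α}`,
and for `α = 0` it is the closure of `{x | u x > 0}`. -/
noncomputable def cut {X : Type*} [MetricSpace X] (u : X → ℝ) (α : ℝ) : Set X :=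
  if α = 0 then closure {x | 0 < u x} else {x | α ≤ u x}

/-- `u` is a normal upper semicontinuous fuzzy set: it takes values in `[0,1]` and
all α-cuts (`α ∈ [0,1]`) are nonempty and closed. -/
def FUSC {X : Type*} [MetricSpace X] (u : X → ℝ) : Prop :=
  (∀ x, u x ∈ Set.Icc (0:ℝ) 1) ∧
    ∀ α ∈ Set.Icc (0:ℝ) 1, (cut u α).Nonempty ∧ IsClosed (cut u α)

/-- `F_USCG(X)`: fuzzy sets in `F_USC(X)` with compact positive α-cuts. -/
def FUSCG {X : Type*} [MetricSpace X] (u : X → ℝ) : Prop :=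
  FUSC u ∧ ∀ α ∈ Set.Ioc (0:ℝ) 1, IsCompact (cut u α)

/-- `F_USCB(X)`: fuzzy sets in `F_USC(X)` with compact support. -/
def FUSCB {X : Type*} [MetricSpace X] (u : X → ℝ) : Prop :=
  FUSC u ∧ IsCompact (cut u 0)

/-- Kuratowski lower limit of a sequence of sets. -/
def kurLiminf {Y : Type*} [MetricSpace Y] (C : ℕ → Set Y) : Set Y :=
  {y | ∃ f : ℕ → Y, (∀ n, f n ∈ C n) ∧ Tendsto f atTop (𝓝 y)}

/-- Kuratowski upper limit of a sequence of sets. -/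
def kurLimsup {Y : Type*} [MetricSpace Y] (C : ℕ → Set Y) : Set Y :=
  {y | ∃ φ : ℕ → ℕ, StrictMono φ ∧
        ∃ f : ℕ → Y, (∀ n, f n ∈ C (φ n)) ∧ Tendsto f atTop (𝓝 y)}

/-- Kuratowski convergence of a sequence of sets to a set. -/
def KurConv {Y : Type*} [MetricSpace Y] (C : ℕ → Set Y) (D : Set Y) : Prop :=
  kurLiminf C = D ∧ kurLimsup C = D

/-- The endograph of `u`: `{(x,t) ∈ X × [0,1] : u x ≥ t}`. -/
def endo {X : Type*} [MetricSpace X] (u : X → ℝ) : Set (X × ℝ) :=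
  {p | p.2 ∈ Set.Icc (0:ℝ) 1 ∧ p.2 ≤ u p.1}

/-- The sendograph of `u`: `end u ∩ ([u]₀ × [0,1])`. -/
noncomputable def sendo {X : Type*} [MetricSpace X] (u : X → ℝ) : Set (X × ℝ) :=
  endo u ∩ (cut u 0) ×ˢ (Set.Icc (0:ℝ) 1)

/-- Γ-convergence: Kuratowski convergence of endographs. -/
def GammaConv {X : Type*} [MetricSpace X] (un : ℕ → X → ℝ) (u : X → ℝ) : Prop :=
  KurConv (fun n => endo (un n)) (endo u)

/-- The endograph metric. -/
noncomputable def Hend {X : Type*} [MetricSpace X] (u v : X → ℝ) : ℝ :=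
  hausdorffDist (endo u) (endo v)

/-- The sendograph metric. -/
noncomputable def Hsend {X : Type*} [MetricSpace X] (u v : X → ℝ) : ℝ :=
  hausdorffDist (sendo u) (sendo v)

/-- The set of platform points of `u`:
`α ∈ (0,1)` with `closure {u > α}` a proper subset of `[u]_α`. -/
def Pset {X : Type*} [MetricSpace X] (u : X → ℝ) : Set ℝ :=
  {α | α ∈ Set.Ioo (0:ℝ) 1 ∧ closure {x | α < u x} ⊂ cut u α}

/-- `P₀(u)`: the set of `α ∈ (0,1)` such that `H([u]_β, [u]_α)` does not tend to `0`
as `β → α`. -/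
def P0set {X : Type*} [MetricSpace X] (u : X → ℝ) : Set ℝ :=
  {α | α ∈ Set.Ioo (0:ℝ) 1 ∧
    ¬ Tendsto (fun β => hausdorffDist (cut u β) (cut u α)) (𝓝[≠] α) (𝓝 0)}


/-!
(i) ⇒ (iii): given `x n ∈ [u n]_α`, pass to a subsequence with `u n → v` in `H_end`; the points
`(x n, α) ∈ end (u n)` are then close to points of `end v` lying above level `α / 2`, a compact
set, so a further subsequence of `x n` converges to a point of `[v]_α`. Closedness is uniqueness
of `H_end`-limits.

(ii) ⇒ (i): for `c k = 1 / (k + 1)`, the truncated endographs `end u ∩ (X × [c k, 1])`, `u ∈ U`,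
all lie in the compact set `closure U(c k) × [c k, 1]`, so a diagonal subsequence makes each of
them converge in the Hausdorff metric to a compact limit `T k`. Above level `c k` every `T j` lies
in `T k`, hence the upper envelope `v` of `⋃ k, T k` belongs to `F_USCG(X)` and its truncation
above `c k` is captured by `T k`. Comparing endographs only above level `c k` costs at most `c k`
in `H_end`, so `s (φ n) → v`, and `v ∈ U` because `U` is closed.
-/

section FuzzySet

variable {X : Type*} [MetricSpace X]

lemma cut_of_ne_zero (u : X → ℝ) {α : ℝ} (hα : α ≠ 0) : cut u α = {x | α ≤ u x} := if_neg hα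

lemma mk_mem_endo_iff {u : X → ℝ} {x : X} {α : ℝ} (hα : α ∈ Ioc (0:ℝ) 1) :
    (x, α) ∈ endo u ↔ x ∈ cut u α := by
  rw [cut_of_ne_zero u hα.1.ne']
  exact ⟨fun h => h.2, fun h => ⟨Ioc_subset_Icc_self hα, h⟩⟩

lemma mk_zero_mem_endo {u : X → ℝ} (hu : ∀ x, 0 ≤ u x) (x : X) : (x, (0:ℝ)) ∈ endo u :=
  ⟨⟨le_rfl, zero_le_one⟩, hu x⟩

lemma FUSC.nonneg {u : X → ℝ} (hu : FUSC u) (x : X) : 0 ≤ u x := (hu.1 x).1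

lemma FUSC.exists_one_le {u : X → ℝ} (hu : FUSC u) : ∃ x, 1 ≤ u x := by
  have := (hu.2 1 ⟨zero_le_one, le_rfl⟩).1
  rwa [cut_of_ne_zero u one_ne_zero] at this

lemma FUSCG.of_isCompact_superlevel {u : X → ℝ} (h01 : ∀ x, u x ∈ Icc (0:ℝ) 1)
    (h1 : ∃ x, 1 ≤ u x) (hcpt : ∀ α ∈ Ioc (0:ℝ) 1, IsCompact {x | α ≤ u x}) : FUSCG u := by
  have hcut : ∀ α ∈ Ioc (0:ℝ) 1, IsCompact (cut u α) := fun α hα => by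
    rw [cut_of_ne_zero u hα.1.ne']
    exact hcpt α hα
  obtain ⟨x₁, hx₁⟩ := h1
  refine ⟨⟨h01, fun α hα => ?_⟩, hcut⟩
  rcases hα.1.eq_or_lt with rfl | hα₀
  · simp only [cut, if_true]
    exact ⟨⟨x₁, subset_closure (one_pos.trans_le hx₁)⟩, isClosed_closure⟩
  · refine ⟨⟨x₁, ?_⟩, (hcut α ⟨hα₀, hα.2⟩).isClosed⟩
    rw [cut_of_ne_zero u hα₀.ne']
    exact hα.2.trans hx₁

lemma FUSC.upperSemicontinuous {u : X → ℝ} (hu : FUSC u) : UpperSemicontinuous u := by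
  refine upperSemicontinuous_iff_isClosed_preimage.2 fun α => ?_
  rcases le_or_gt α 0 with hα | hα
  · convert isClosed_univ
    exact eq_univ_of_forall fun x => hα.trans (hu.nonneg x)
  rcases le_or_gt α 1 with hα₁ | hα₁
  · have := (hu.2 α ⟨hα.le, hα₁⟩).2
    rwa [cut_of_ne_zero u hα.ne'] at this
  · convert isClosed_empty
    exact eq_empty_of_forall_notMem fun x hx => (hα₁.trans_le hx).not_ge (hu.1 x).2

lemma isClosed_endo {u : X → ℝ} (hu : FUSC u) : IsClosed (endo u) :=
  (isClosed_Icc.preimage continuous_snd).inter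
    (upperSemicontinuous_iff_IsClosed_hypograph.1 hu.upperSemicontinuous)

lemma dist_mk_zero {p : X × ℝ} (hp : 0 ≤ p.2) : dist p (p.1, 0) = p.2 := by
  rw [Prod.dist_eq, dist_self, Real.dist_eq, sub_zero, abs_of_nonneg hp, max_eq_right hp]

lemma hausdorffEDist_endo_ne_top {u w : X → ℝ} (hu : ∀ x, 0 ≤ u x) (hw : ∀ x, 0 ≤ w x) :
    hausdorffEDist (endo u) (endo w) ≠ ⊤ := by
  have near : ∀ {u w : X → ℝ}, (∀ x, 0 ≤ w x) → ∀ p ∈ endo u, ∃ q ∈ endo w, edist p q ≤ 1 :=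
    fun hw p hp => ⟨(p.1, 0), mk_zero_mem_endo hw p.1, by
      rw [edist_dist, dist_mk_zero hp.1.1]
      exact ENNReal.ofReal_le_one.2 hp.1.2⟩
  exact ((hausdorffEDist_le_of_mem_edist (near hw) (near hu)).trans_lt ENNReal.one_lt_top).ne

lemma FUSC.eq_of_Hend_eq_zero {u w : X → ℝ} (hu : FUSC u) (hw : FUSC w) (h : Hend u w = 0) :
    u = w := by
  have h_eq : endo u = endo w := ((isClosed_endo hu).hausdorffDist_zero_iff_eq (isClosed_endo hw)
    (hausdorffEDist_endo_ne_top hu.nonneg hw.nonneg)).1 h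
  funext x
  have h₁ : (x, u x) ∈ endo w := h_eq ▸ ⟨hu.1 x, le_rfl⟩
  have h₂ : (x, w x) ∈ endo u := h_eq ▸ ⟨hw.1 x, le_rfl⟩
  exact le_antisymm h₁.2 h₂.2

end FuzzySet

section HausdorffLimit

variable {Y : Type*} [MetricSpace Y]

lemma exists_tendsto_dist_zero_of_tendsto_hausdorffDist {A B : ℕ → Set Y}
    (hfin : ∀ n, hausdorffEDist (A n) (B n) ≠ ⊤)
    (hAB : Tendsto (fun n => hausdorffDist (A n) (B n)) atTop (𝓝 0))
    {p : ℕ → Y} (hp : ∀ n, p n ∈ A n) :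
    ∃ q : ℕ → Y, (∀ n, q n ∈ B n) ∧ Tendsto (fun n => dist (p n) (q n)) atTop (𝓝 0) := by
  have near : ∀ n : ℕ, ∃ q ∈ B n, dist (p n) q < hausdorffDist (A n) (B n) + 1 / ((n : ℝ) + 1) :=
    fun n => exists_dist_lt_of_hausdorffDist_lt (hp n)
      (lt_add_of_pos_right _ Nat.one_div_pos_of_nat) (hfin n)
  choose q hqB hq using near
  refine ⟨q, hqB, squeeze_zero (fun _ => dist_nonneg) (fun n => (hq n).le) ?_⟩
  simpa using hAB.add tendsto_one_div_add_atTop_nhds_zero_nat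

lemma mem_of_tendsto_hausdorffDist {A : ℕ → Set Y} {B : Set Y} (hB : IsClosed B)
    (hfin : ∀ n, hausdorffEDist (A n) B ≠ ⊤)
    (hAB : Tendsto (fun n => hausdorffDist (A n) B) atTop (𝓝 0))
    {p : ℕ → Y} {y : Y} (hp : ∀ᶠ n in atTop, p n ∈ A n) (hpy : Tendsto p atTop (𝓝 y)) :
    y ∈ B := by
  rw [← hB.closure_eq, Metric.mem_closure_iff]
  intro ε hε
  obtain ⟨n, hpA, hpy, hH⟩ := (hp.and ((hpy.eventually (ball_mem_nhds y (half_pos hε))).and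
    (hAB.eventually (gt_mem_nhds (half_pos hε))))).exists
  obtain ⟨b, hb, hpb⟩ := exists_dist_lt_of_hausdorffDist_lt hpA hH (hfin n)
  refine ⟨b, hb, ?_⟩
  linarith [dist_triangle y (p n) b, dist_comm y (p n)]

lemma inter_subset_of_tendsto_hausdorffDist {A B : ℕ → Set Y} {A' B' V : Set Y} (hV : IsOpen V)
    (hB' : IsClosed B') (hA_fin : ∀ n, hausdorffEDist (A n) A' ≠ ⊤)
    (hB_fin : ∀ n, hausdorffEDist (B n) B' ≠ ⊤)
    (hA : Tendsto (fun n => hausdorffDist (A n) A') atTop (𝓝 0))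
    (hB : Tendsto (fun n => hausdorffDist (B n) B') atTop (𝓝 0)) (hAB : ∀ n, A n ∩ V ⊆ B n) :
    A' ∩ V ⊆ B' := by
  rintro p ⟨hp, hpV⟩
  obtain ⟨q, hq, hpq⟩ := exists_tendsto_dist_zero_of_tendsto_hausdorffDist
    (A := fun _ => A') (p := fun _ => p) (fun n => by rw [hausdorffEDist_comm]; exact hA_fin n)
    (by simpa only [hausdorffDist_comm] using hA) fun _ => hp
  have hqp : Tendsto q atTop (𝓝 p) := tendsto_const_nhds.congr_dist hpq
  refine mem_of_tendsto_hausdorffDist hB' hB_fin hB ?_ hqp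
  filter_upwards [hqp.eventually (hV.mem_nhds hpV)] with n hn
  exact hAB n ⟨hq n, hn⟩

lemma IsCompact.exists_subseq_tendsto_of_tendsto_dist {K : Set Y} (hK : IsCompact K)
    {p q : ℕ → Y} (hq : ∀ᶠ n in atTop, q n ∈ K)
    (hpq : Tendsto (fun n => dist (p n) (q n)) atTop (𝓝 0)) :
    ∃ a ∈ K, ∃ ψ : ℕ → ℕ, StrictMono ψ ∧ Tendsto (p ∘ ψ) atTop (𝓝 a) := by
  obtain ⟨a, ha, ψ, hψ, hqa⟩ := hK.tendsto_subseq' hq.frequently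
  refine ⟨a, ha, ψ, hψ, hqa.congr_dist ?_⟩
  exact (hpq.comp hψ.tendsto_atTop).congr fun n => dist_comm _ _

open TopologicalSpace in
lemma exists_subseq_tendsto_hausdorffDist {K : ℕ → Set Y} (hK : ∀ k, IsCompact (K k))
    {S : ℕ → ℕ → Set Y} (hS : ∀ k n, IsClosed (S k n)) (hS_ne : ∀ k n, (S k n).Nonempty)
    (hSK : ∀ k n, S k n ⊆ K k) :
    ∃ T : ℕ → Set Y, ∃ φ : ℕ → ℕ, StrictMono φ ∧ ∀ k, IsCompact (T k) ∧ (T k).Nonempty ∧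
      T k ⊆ K k ∧ Tendsto (fun n => hausdorffDist (S k (φ n)) (T k)) atTop (𝓝 0) := by
  let F : ℕ → ℕ → NonemptyCompacts Y := fun n k =>
    ⟨⟨S k n, (hK k).of_isClosed_subset (hS k n) (hSK k n)⟩, hS_ne k n⟩
  have hF : ∀ n, F n ∈ univ.pi fun k => {L : NonemptyCompacts Y | ↑L ⊆ K k} :=
    fun n k _ => hSK k n
  obtain ⟨G, hG, φ, hφ, hFG⟩ := (isCompact_univ_pi fun k =>
    NonemptyCompacts.isCompact_subsets_of_isCompact (hK k)).tendsto_subseq hF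
  refine ⟨fun k => G k, φ, hφ, fun k => ⟨(G k).isCompact, (G k).nonempty, hG k (mem_univ k), ?_⟩⟩
  exact tendsto_iff_dist_tendsto_zero.1 (tendsto_pi_nhds.1 hFG k)

end HausdorffLimit

lemma tendsto_zero_of_forall_le_add {f c : ℕ → ℝ} {g : ℕ → ℕ → ℝ} (hf : ∀ n, 0 ≤ f n)
    (hc : Tendsto c atTop (𝓝 0)) (hg : ∀ k, Tendsto (g k) atTop (𝓝 0))
    (hfg : ∀ k n, f n ≤ c k + g k n) : Tendsto f atTop (𝓝 0) := by
  refine tendsto_order.2 ⟨fun a ha => Eventually.of_forall fun n => ha.trans_le (hf n),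
    fun ε hε => ?_⟩
  obtain ⟨k, hk⟩ := (hc.eventually (gt_mem_nhds (half_pos hε))).exists
  filter_upwards [(hg k).eventually (gt_mem_nhds (half_pos hε))] with n hn
  linarith [hfg k n]

section Endograph

variable {X : Type*} [MetricSpace X]

def truncEndo (u : X → ℝ) (c : ℝ) : Set (X × ℝ) := endo u ∩ {p | c ≤ p.2}

lemma isClosed_truncEndo {u : X → ℝ} (hu : FUSC u) (c : ℝ) : IsClosed (truncEndo u c) :=
  (isClosed_endo hu).inter (isClosed_le continuous_const continuous_snd)

lemma truncEndo_nonempty {u : X → ℝ} (hu : FUSC u) {c : ℝ} (hc : c ≤ 1) :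
    (truncEndo u c).Nonempty :=
  let ⟨x, hx⟩ := hu.exists_one_le
  ⟨(x, 1), ⟨⟨zero_le_one, le_rfl⟩, hx⟩, hc⟩

lemma truncEndo_subset_cut_prod (u : X → ℝ) {c : ℝ} (hc : c ≠ 0) :
    truncEndo u c ⊆ cut u c ×ˢ Icc c 1 := by
  rintro p ⟨⟨hp, hpu⟩, hcp⟩
  rw [cut_of_ne_zero u hc]
  exact ⟨hcp.trans hpu, hcp, hp.2⟩

lemma isCompact_truncEndo {u : X → ℝ} (hu : FUSCG u) {c : ℝ} (hc : c ∈ Ioc (0:ℝ) 1) :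
    IsCompact (truncEndo u c) :=
  ((hu.2 c hc).prod isCompact_Icc).of_isClosed_subset (isClosed_truncEndo hu.1 c)
    (truncEndo_subset_cut_prod u hc.1.ne')

lemma exists_mem_endo_dist_le {w : X → ℝ} {p r : X × ℝ} {y : ℝ} (hp : 0 ≤ p.2) (hpy : p.2 ≤ y)
    (hr : r ∈ endo w) : ∃ q ∈ endo w, dist p q ≤ dist (p.1, y) r := by
  refine ⟨(r.1, min r.2 p.2), ⟨⟨le_min hr.1.1 hp, (min_le_left _ _).trans hr.1.2⟩,
    (min_le_left _ _).trans hr.2⟩, ?_⟩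
  rw [Prod.dist_eq, Prod.dist_eq]
  refine max_le_max le_rfl ?_
  rw [Real.dist_eq, Real.dist_eq]
  rcases le_total r.2 p.2 with h | h
  · rw [min_eq_left h, abs_of_nonneg (sub_nonneg.2 h)]
    exact (sub_le_sub_right hpy _).trans (le_abs_self _)
  · rw [min_eq_right h, sub_self, abs_zero]
    exact abs_nonneg _

lemma infDist_endo_le_add_hausdorffDist {u w : X → ℝ} (hw : ∀ x, 0 ≤ w x) {c : ℝ} (hc : 0 ≤ c)
    {S T : Set (X × ℝ)} (hfin : hausdorffEDist S T ≠ ⊤) (hTw : T ⊆ endo w)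
    (huS : ∀ x, c < u x → (x, u x) ∈ S) {p : X × ℝ} (hp : p ∈ endo u) :
    infDist p (endo w) ≤ c + hausdorffDist S T := by
  rcases le_or_gt p.2 c with hpc | hpc
  · calc infDist p (endo w) ≤ dist p (p.1, 0) := infDist_le_dist_of_mem (mk_zero_mem_endo hw p.1)
      _ = p.2 := dist_mk_zero hp.1.1
      _ ≤ c + hausdorffDist S T := le_add_of_le_of_nonneg hpc hausdorffDist_nonneg
  · refine le_of_forall_pos_lt_add fun δ hδ => ?_
    obtain ⟨r, hrT, hr⟩ := exists_dist_lt_of_hausdorffDist_lt (huS p.1 (hpc.trans_le hp.2))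
      (lt_add_of_pos_right _ hδ) hfin
    obtain ⟨q, hq, hpq⟩ := exists_mem_endo_dist_le hp.1.1 hp.2 (hTw hrT)
    calc infDist p (endo w) ≤ dist p q := infDist_le_dist_of_mem hq
      _ < hausdorffDist S T + δ := hpq.trans_lt hr
      _ ≤ c + hausdorffDist S T + δ := by linarith

lemma Hend_le_add_hausdorffDist {u w : X → ℝ} (hu : ∀ x, 0 ≤ u x) (hw : ∀ x, 0 ≤ w x) {c : ℝ}
    (hc : 0 ≤ c) {S T : Set (X × ℝ)} (hfin : hausdorffEDist S T ≠ ⊤) (hSu : S ⊆ endo u)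
    (hTw : T ⊆ endo w) (huS : ∀ x, c < u x → (x, u x) ∈ S) (hwT : ∀ x, c < w x → (x, w x) ∈ T) :
    Hend u w ≤ c + hausdorffDist S T := by
  refine hausdorffDist_le_of_infDist (add_nonneg hc hausdorffDist_nonneg)
    (fun p hp => infDist_endo_le_add_hausdorffDist hw hc hfin hTw huS hp) fun p hp => ?_
  rw [hausdorffDist_comm]
  exact infDist_endo_le_add_hausdorffDist hu hc (by rwa [hausdorffEDist_comm]) hSu hwT hp

end Endograph

section UpperEnvelope

variable {X : Type*} {E : Set (X × ℝ)}

noncomputable def upperEnvelope (E : Set (X × ℝ)) (x : X) : ℝ := sSup (insert 0 {t | (x, t) ∈ E})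

lemma insert_slice_subset_Icc (hE : ∀ p ∈ E, p.2 ∈ Icc (0:ℝ) 1) (x : X) :
    insert 0 {t | (x, t) ∈ E} ⊆ Icc (0:ℝ) 1 := by
  rintro t (rfl | ht)
  exacts [⟨le_rfl, zero_le_one⟩, hE _ ht]

lemma upperEnvelope_mem_Icc (hE : ∀ p ∈ E, p.2 ∈ Icc (0:ℝ) 1) (x : X) :
    upperEnvelope E x ∈ Icc (0:ℝ) 1 :=
  ⟨le_csSup (bddAbove_Icc.mono (insert_slice_subset_Icc hE x)) (mem_insert _ _),
    csSup_le (insert_nonempty _ _) fun _ ht => (insert_slice_subset_Icc hE x ht).2⟩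

lemma le_upperEnvelope (hE : ∀ p ∈ E, p.2 ∈ Icc (0:ℝ) 1) {p : X × ℝ} (hp : p ∈ E) :
    p.2 ≤ upperEnvelope E p.1 :=
  le_csSup (bddAbove_Icc.mono (insert_slice_subset_Icc hE p.1)) (mem_insert_of_mem _ hp)

lemma mk_upperEnvelope_mem [TopologicalSpace X] (hE : ∀ p ∈ E, p.2 ∈ Icc (0:ℝ) 1)
    {K : Set (X × ℝ)} (hK : IsClosed K) {α : ℝ} (hα : 0 ≤ α) (hEK : E ∩ {p | α < p.2} ⊆ K)
    {x : X} (hx : α < upperEnvelope E x) : (x, upperEnvelope E x) ∈ K := by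
  obtain ⟨t, -, ht, htE⟩ := exists_seq_tendsto_sSup (insert_nonempty 0 {t | (x, t) ∈ E})
    (bddAbove_Icc.mono (insert_slice_subset_Icc hE x))
  refine hK.mem_of_tendsto (tendsto_const_nhds.prodMk_nhds ht) ?_
  filter_upwards [ht.eventually (lt_mem_nhds hx)] with n hn
  exact hEK ⟨(htE n).resolve_left (hα.trans_lt hn).ne', hn⟩

lemma subset_endo_upperEnvelope [MetricSpace X] (hE : ∀ p ∈ E, p.2 ∈ Icc (0:ℝ) 1) :
    E ⊆ endo (upperEnvelope E) :=
  fun p hp => ⟨hE p hp, le_upperEnvelope hE hp⟩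

lemma FUSCG_upperEnvelope [MetricSpace X] (hE : ∀ p ∈ E, p.2 ∈ Icc (0:ℝ) 1)
    (hE₁ : ∃ x, (x, 1) ∈ E) (hE_cpt : ∀ α > 0, ∃ K ⊆ E, IsCompact K ∧ E ∩ {p | α < p.2} ⊆ K) :
    FUSCG (upperEnvelope E) := by
  refine .of_isCompact_superlevel (upperEnvelope_mem_Icc hE) ?_ fun α hα => ?_
  · obtain ⟨x, hx⟩ := hE₁
    exact ⟨x, le_upperEnvelope hE hx⟩
  obtain ⟨K, hKE, hK, hEK⟩ := hE_cpt (α / 2) (half_pos hα.1)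
  have h_eq : {x | α ≤ upperEnvelope E x} = Prod.fst '' (K ∩ {p | α ≤ p.2}) := by
    ext x
    refine ⟨fun (hx : α ≤ upperEnvelope E x) => ⟨_, ⟨mk_upperEnvelope_mem hE hK.isClosed
      (half_pos hα.1).le hEK (by linarith [hα.1]), hx⟩, rfl⟩, ?_⟩
    rintro ⟨p, ⟨hpK, hαp⟩, rfl⟩
    exact hαp.trans (le_upperEnvelope hE (hKE hpK))
  rw [h_eq]
  exact (hK.inter_right (isClosed_le continuous_const continuous_snd)).image continuous_fst

end UpperEnvelope

section Compactness

variable {X : Type*} [MetricSpace X] {U : Set (X → ℝ)}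

lemma isCompact_iUnion_cut_of_seqCompact (hU : ∀ u ∈ U, FUSCG u)
    (hseq : ∀ s : ℕ → X → ℝ, (∀ n, s n ∈ U) → ∃ v ∈ U, ∃ φ : ℕ → ℕ, StrictMono φ ∧
      Tendsto (fun n => Hend (s (φ n)) v) atTop (𝓝 0))
    {α : ℝ} (hα : α ∈ Ioc (0:ℝ) 1) : IsCompact (⋃ u ∈ U, cut u α) := by
  refine IsSeqCompact.isCompact fun x hx => ?_
  choose u huU hxu using fun n => mem_iUnion₂.1 (hx n)
  obtain ⟨v, hvU, φ, hφ, huv⟩ := hseq u huU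
  have hv := hU v hvU
  obtain ⟨q, hqv, hpq⟩ := exists_tendsto_dist_zero_of_tendsto_hausdorffDist
    (fun n => hausdorffEDist_endo_ne_top (hU _ (huU (φ n))).1.nonneg hv.1.nonneg) huv
    (p := fun n => (x (φ n), α)) fun n => (mk_mem_endo_iff hα).2 (hxu (φ n))
  -- near level `α`, the points `q n` stay in the compact part of `endo v` above `α / 2`
  have hq : ∀ᶠ n in atTop, q n ∈ truncEndo v (α / 2) := by
    filter_upwards [hpq.eventually (gt_mem_nhds (half_pos hα.1))] with n hn
    have h₂ : dist α (q n).2 ≤ dist (x (φ n), α) (q n) := by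
      rw [Prod.dist_eq]
      exact le_max_right _ _
    rw [Real.dist_eq] at h₂
    exact ⟨hqv n, show α / 2 ≤ (q n).2 by linarith [le_abs_self (α - (q n).2)]⟩
  obtain ⟨a, ha, ψ, hψ, hpa⟩ := (isCompact_truncEndo hv ⟨half_pos hα.1, by linarith [hα.2]⟩
    ).exists_subseq_tendsto_of_tendsto_dist hq hpq
  have ha₂ : a.2 = α := tendsto_nhds_unique ((continuous_snd.tendsto a).comp hpa) tendsto_const_nhds
  refine ⟨a.1, mem_iUnion₂.2 ⟨v, hvU, (mk_mem_endo_iff hα).1 ?_⟩, φ ∘ ψ, hφ.comp hψ,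
    (continuous_fst.tendsto a).comp hpa⟩
  exact ha₂ ▸ ha.1

lemma mem_of_tendsto_Hend_of_seqCompact (hU : ∀ u ∈ U, FUSCG u)
    (hseq : ∀ s : ℕ → X → ℝ, (∀ n, s n ∈ U) → ∃ v ∈ U, ∃ φ : ℕ → ℕ, StrictMono φ ∧
      Tendsto (fun n => Hend (s (φ n)) v) atTop (𝓝 0))
    {s : ℕ → X → ℝ} (hs : ∀ n, s n ∈ U) {v : X → ℝ} (hv : FUSC v)
    (hsv : Tendsto (fun n => Hend (s n) v) atTop (𝓝 0)) : v ∈ U := by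
  obtain ⟨w, hwU, φ, hφ, hsw⟩ := hseq s hs
  have hw := (hU w hwU).1
  have htri : ∀ n, Hend v w ≤ Hend (s (φ n)) v + Hend (s (φ n)) w := fun n => by
    unfold Hend
    rw [hausdorffDist_comm (s := endo (s (φ n)))]
    exact hausdorffDist_triangle
      (hausdorffEDist_endo_ne_top hv.nonneg (hU _ (hs (φ n))).1.nonneg)
  have hvw : Hend v w ≤ 0 := by
    simpa using ge_of_tendsto' ((hsv.comp hφ.tendsto_atTop).add hsw) htri
  rw [hv.eq_of_Hend_eq_zero hw (hvw.antisymm hausdorffDist_nonneg)]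
  exact hwU

end Compactness

lemma exists_subseq_tendsto_Hend {X : Type*} [MetricSpace X] {U : Set (X → ℝ)}
    (hU : ∀ u ∈ U, FUSCG u)
    (hcpt : ∀ α ∈ Ioc (0:ℝ) 1, IsCompact (closure (⋃ u ∈ U, cut u α)))
    (hclosed : ∀ s : ℕ → X → ℝ, (∀ n, s n ∈ U) → ∀ v : X → ℝ, FUSCG v →
      Tendsto (fun n => Hend (s n) v) atTop (𝓝 0) → v ∈ U)
    {s : ℕ → X → ℝ} (hs : ∀ n, s n ∈ U) :
    ∃ v ∈ U, ∃ φ : ℕ → ℕ, StrictMono φ ∧ Tendsto (fun n => Hend (s (φ n)) v) atTop (𝓝 0) := by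
  set c : ℕ → ℝ := fun k => 1 / ((k : ℝ) + 1)
  have hc : ∀ k, c k ∈ Ioc (0:ℝ) 1 := fun k =>
    ⟨Nat.one_div_pos_of_nat, div_le_one_of_le₀ (by simp) (by positivity)⟩
  have hs_fusc : ∀ n, FUSC (s n) := fun n => (hU _ (hs n)).1
  set K : ℕ → Set (X × ℝ) := fun k => closure (⋃ u ∈ U, cut u (c k)) ×ˢ Icc (c k) 1
  have hK : ∀ k, IsCompact (K k) := fun k => (hcpt _ (hc k)).prod isCompact_Icc
  have hsK : ∀ k n, truncEndo (s n) (c k) ⊆ K k := fun k n =>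
    (truncEndo_subset_cut_prod _ (hc k).1.ne').trans <| prod_mono
      ((subset_biUnion_of_mem (u := fun u => cut u (c k)) (hs n)).trans subset_closure) le_rfl
  obtain ⟨T, φ, hφ, hT⟩ := exists_subseq_tendsto_hausdorffDist hK
    (fun k n => isClosed_truncEndo (hs_fusc n) _)
    (fun k n => truncEndo_nonempty (hs_fusc n) (hc k).2) hsK
  choose hT_cpt hT_ne hTK hsT using hT
  have hfin : ∀ k n, hausdorffEDist (truncEndo (s (φ n)) (c k)) (T k) ≠ ⊤ := fun k n =>
    hausdorffEDist_ne_top_of_nonempty_of_bounded (truncEndo_nonempty (hs_fusc _) (hc k).2) (hT_ne k)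
      ((hK k).isBounded.subset (hsK k _)) (hT_cpt k).isBounded
  have hT_cut : ∀ j k, T j ∩ {p | c k < p.2} ⊆ T k := fun j k =>
    inter_subset_of_tendsto_hausdorffDist (isOpen_lt continuous_const continuous_snd)
      (hT_cpt k).isClosed (hfin j) (hfin k) (hsT j) (hsT k)
      fun _ p hp => ⟨hp.1.1, show c k ≤ p.2 from le_of_lt hp.2⟩
  set E := ⋃ k, T k
  have hE : ∀ p ∈ E, p.2 ∈ Icc (0:ℝ) 1 := fun p hp =>
    let ⟨k, hk⟩ := mem_iUnion.1 hp
    Icc_subset_Icc_left (hc k).1.le (hTK k hk).2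
  have hE_cut : ∀ k, E ∩ {p | c k < p.2} ⊆ T k := fun k => by
    rw [iUnion_inter, iUnion_subset_iff]
    exact fun j => hT_cut j k
  set v := upperEnvelope E
  have hv : FUSCG v := by
    refine FUSCG_upperEnvelope hE ?_ fun α hα => ?_
    · obtain ⟨p, hp⟩ := hT_ne 0
      have hp₂ : p.2 = 1 := le_antisymm (hTK 0 hp).2.2 (by simpa [c] using (hTK 0 hp).2.1)
      exact ⟨p.1, mem_iUnion.2 ⟨0, hp₂ ▸ hp⟩⟩
    · obtain ⟨k, hk⟩ := exists_nat_one_div_lt hα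
      exact ⟨T k, subset_iUnion T k, hT_cpt k, fun p ⟨hp, hpα⟩ => hE_cut k ⟨hp, hk.trans hpα⟩⟩
  have hsv : Tendsto (fun n => Hend (s (φ n)) v) atTop (𝓝 0) :=
    tendsto_zero_of_forall_le_add (fun n => hausdorffDist_nonneg)
      tendsto_one_div_add_atTop_nhds_zero_nat hsT fun k n =>
      Hend_le_add_hausdorffDist (hs_fusc _).nonneg hv.1.nonneg (hc k).1.le (hfin k n)
        inter_subset_left
        ((subset_iUnion T k).trans (subset_endo_upperEnvelope hE))
        (fun x hx => ⟨⟨(hs_fusc _).1 x, le_rfl⟩, hx.le⟩)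
        fun x hx => mk_upperEnvelope_mem hE (hT_cpt k).isClosed (hc k).1.le (hE_cut k) hx
  exact ⟨v, hclosed _ (fun n => hs (φ n)) v hv hsv, φ, hφ, hsv⟩

theorem compact_FUSCG_tfae
    {X : Type*} [MetricSpace X] (U : Set (X → ℝ)) (hU : ∀ u ∈ U, FUSCG u) :
    List.TFAE
      [ -- (i) U is compact in (F_USCG(X), H_end): every sequence in U has a
        -- subsequence H_end-converging to an element of U
        (∀ s : ℕ → X → ℝ, (∀ n, s n ∈ U) →
          ∃ v ∈ U, ∃ φ : ℕ → ℕ, StrictMono φ ∧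
            Tendsto (fun n => Hend (s (φ n)) v) atTop (𝓝 0)),
        -- (ii) each U(α) is relatively compact and U is closed in (F_USCG(X), H_end)
        ((∀ α ∈ Set.Ioc (0:ℝ) 1, IsCompact (closure (⋃ u ∈ U, cut u α))) ∧
          (∀ s : ℕ → X → ℝ, (∀ n, s n ∈ U) → ∀ v : X → ℝ, FUSCG v →
            Tendsto (fun n => Hend (s n) v) atTop (𝓝 0) → v ∈ U)),
        -- (iii) each U(α) is compact and U is closed in (F_USCG(X), H_end)
        ((∀ α ∈ Set.Ioc (0:ℝ) 1, IsCompact (⋃ u ∈ U, cut u α)) ∧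
          (∀ s : ℕ → X → ℝ, (∀ n, s n ∈ U) → ∀ v : X → ℝ, FUSCG v →
            Tendsto (fun n => Hend (s n) v) atTop (𝓝 0) → v ∈ U)) ] := by
  tfae_have 1 → 3 := fun hseq => ⟨fun α hα => isCompact_iUnion_cut_of_seqCompact hU hseq hα,
    fun s hs v hv hsv => mem_of_tendsto_Hend_of_seqCompact hU hseq hs hv.1 hsv⟩
  tfae_have 3 → 2 := fun ⟨hcpt, hclosed⟩ =>
    ⟨fun α hα => (hcpt α hα).closure, hclosed⟩
  tfae_have 2 → 1 := fun ⟨hcpt, hclosed⟩ _ hs => exists_subseq_tendsto_Hend hU hcpt hclosed hs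
  tfae_finish
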